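/- Let $H$ be a real Hilbert space, $\mathcal{A}$ self-adjoint positive, and let $u$ be a sufficiently smooth solution of $\tau u_{ttt} + \alpha u_{tt} + c^2\mathcal{A}u + b\mathcal{A}u_t = 0$ with $\tau, \alpha, b, c > 0$ and $\gamma = \alpha - \frac{c^2\tau}{b} > 0$. Fix $k \in (\frac{c^2}{b}, \frac{\alpha}{\tau})$ and define $E_0(t) = b\|\mathcal{A}^{1/2}u_t + \frac{c^2}{b}\mathcal{A}^{1/2}u\|^2 + \tau\|u_{tt} + k u_t\|^2 + k\tau(\frac{\alpha}{\tau}-k)\|u_t\|^2 + c^2(k - \frac{c^2}{b})\|\mathcal{A}^{1/2}u\|^2$. Then $\frac{d}{dt}E_0(t) = -2\tau(\frac{\alpha}{\tau}-k)\|u_{tt}\|^2 - 2b(k-\frac{c^2}{b})\|\mathcal{A}^{1/2}u_t\|^2 \le 0$; in particular $E_0$ is nonincreasing. -/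

import Mathlib

/-!
Writing `m = α / τ` and `p = c² / b`, the equation factors as
`τ (u''' + m u'') + b A (u' + p u) = 0`. Since `A` is symmetric, `(A v, v)' = 2 (A v, v')`, and
pairing the factored equation with the multiplier `z = u'' + k u'` shows that the derivative of
`τ ‖z‖²` cancels the cross terms in the derivatives of the other three parts of `E₀`, leaving
only the two dissipative terms; their signs come from `p < k < m`.
-/

open scoped RealInnerProductSpace

section

variable {H : Type*} [NormedAddCommGroup H] [InnerProductSpace ℝ H] {A : H →L[ℝ] H}

theorem HasDerivAt.inner_apply_self (hA : (A : H →ₗ[ℝ] H).IsSymmetric) {v : ℝ → H} {v' : H}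
    {t : ℝ} (hv : HasDerivAt v v' t) :
    HasDerivAt (fun s => ⟪A (v s), v s⟫) (2 * ⟪A (v t), v'⟫) t := by
  have hAv : HasDerivAt (fun s => A (v s)) (A v') t := A.hasFDerivAt.comp_hasDerivAt t hv
  refine (hAv.inner ℝ hv).congr_deriv ?_
  have hswap : ⟪A v', v t⟫ = ⟪A (v t), v'⟫ := by
    rw [real_inner_comm]; exact (hA (v t) v').symm
  rw [hswap]; ring

theorem mgt_energy_derivative_eq {τ b m p k : ℝ}
    {x₀ x₁ x₂ x₃ : H} (h : τ • (x₃ + m • x₂) + b • A (x₁ + p • x₀) = 0) :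
    b * (2 * ⟪A (x₁ + p • x₀), x₂ + p • x₁⟫) + τ * (2 * ⟪x₂ + k • x₁, x₃ + k • x₂⟫)
        + k * τ * (m - k) * (2 * ⟪x₁, x₂⟫) + b * p * (k - p) * (2 * ⟪A x₀, x₁⟫)
      = -(2 * τ * (m - k) * ‖x₂‖ ^ 2 + 2 * b * (k - p) * ⟪A x₁, x₁⟫) := by
  have hz : ⟪τ • (x₃ + m • x₂) + b • A (x₁ + p • x₀), x₂ + k • x₁⟫ = 0 := by
    rw [h, inner_zero_left]
  simp only [map_add, map_smul, inner_add_left, inner_add_right, real_inner_smul_left,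
    real_inner_smul_right, real_inner_self_eq_norm_sq] at hz ⊢
  linear_combination 2 * hz - 2 * τ * real_inner_comm x₂ x₃ - 2 * k * τ * real_inner_comm x₁ x₃
    - 2 * k * τ * m * real_inner_comm x₁ x₂

theorem hasDerivAt_mgt_energy (hA : (A : H →ₗ[ℝ] H).IsSymmetric) {τ b m p k : ℝ}
    {u u₁ u₂ u₃ : ℝ → H} {t : ℝ} (hu₁ : HasDerivAt u (u₁ t) t) (hu₂ : HasDerivAt u₁ (u₂ t) t)
    (hu₃ : HasDerivAt u₂ (u₃ t) t)
    (heq : τ • (u₃ t + m • u₂ t) + b • A (u₁ t + p • u t) = 0) :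
    HasDerivAt
      (fun s => b * ⟪A (u₁ s + p • u s), u₁ s + p • u s⟫ + τ * ‖u₂ s + k • u₁ s‖ ^ 2
        + k * τ * (m - k) * ‖u₁ s‖ ^ 2 + b * p * (k - p) * ⟪A (u s), u s⟫)
      (-(2 * τ * (m - k) * ‖u₂ t‖ ^ 2 + 2 * b * (k - p) * ⟪A (u₁ t), u₁ t⟫)) t := by
  have hw := (hu₂.add (hu₁.const_smul p)).inner_apply_self hA
  have hz := (hu₃.add (hu₂.const_smul k)).norm_sq
  have hE := (((hw.const_mul b).add (hz.const_mul τ)).add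
    (hu₂.norm_sq.const_mul (k * τ * (m - k)))).add
    ((hu₁.inner_apply_self hA).const_mul (b * p * (k - p)))
  exact hE.congr_deriv (mgt_energy_derivative_eq heq)

end

theorem mgt_noncritical_energy_identity_general {H : Type*} [NormedAddCommGroup H]
    [InnerProductSpace ℝ H] [CompleteSpace H]
    (A : H →L[ℝ] H) (hA_sa : IsSelfAdjoint A)
    (hA_pos : ∀ v : H, 0 ≤ (inner ℝ (A v) v : ℝ))
    (τ α b c : ℝ) (hτ : 0 < τ) (hb : 0 < b)
    (k : ℝ) (hk1 : c ^ 2 / b < k) (hk2 : k < α / τ)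
    (u u1 u2 u3 : ℝ → H)
    (hu1 : ∀ t, HasDerivAt u (u1 t) t)
    (hu2 : ∀ t, HasDerivAt u1 (u2 t) t)
    (hu3 : ∀ t, HasDerivAt u2 (u3 t) t)
    (heq : ∀ t, τ • u3 t + α • u2 t + c ^ 2 • A (u t) + b • A (u1 t) = 0) :
    ∀ t, 0 ≤ t →
      HasDerivAt
        (fun t =>
          b * (inner ℝ (A (u1 t + (c ^ 2 / b) • u t)) (u1 t + (c ^ 2 / b) • u t) : ℝ)
          + τ * ‖u2 t + k • u1 t‖ ^ 2
          + k * τ * (α / τ - k) * ‖u1 t‖ ^ 2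
          + c ^ 2 * (k - c ^ 2 / b) * (inner ℝ (A (u t)) (u t) : ℝ))
        (-(2 * τ * (α / τ - k) * ‖u2 t‖ ^ 2
            + 2 * b * (k - c ^ 2 / b) * (inner ℝ (A (u1 t)) (u1 t) : ℝ))) t ∧
      -(2 * τ * (α / τ - k) * ‖u2 t‖ ^ 2
          + 2 * b * (k - c ^ 2 / b) * (inner ℝ (A (u1 t)) (u1 t) : ℝ)) ≤ 0 := by
  intro t _
  have hbp : b * (c ^ 2 / b) = c ^ 2 := mul_div_cancel₀ _ hb.ne'
  have hfactored : τ • (u3 t + (α / τ) • u2 t) + b • A (u1 t + (c ^ 2 / b) • u t) = 0 := by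
    rw [← heq t, smul_add, smul_smul, mul_div_cancel₀ _ hτ.ne', map_add, map_smul, smul_add,
      smul_smul, hbp]
    abel
  refine ⟨?_, ?_⟩
  · have hE := hasDerivAt_mgt_energy (A.isSelfAdjoint_iff_isSymmetric.mp hA_sa) (k := k)
      (hu1 t) (hu2 t) (hu3 t) hfactored
    rwa [hbp] at hE
  · exact neg_nonpos.mpr <| add_nonneg
      (mul_nonneg (mul_nonneg (by positivity) (sub_pos.mpr hk2).le) (sq_nonneg _))
      (mul_nonneg (mul_nonneg (by positivity) (sub_pos.mpr hk1).le) (hA_pos _))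

/-- Energy identity for the linearized MGT equation in the non-critical regime:
`E₀'(t) = -2τ(α/τ - k)‖uₜₜ‖² - 2b(k - c²/b)‖A½uₜ‖² ≤ 0`
(with `‖A½v‖²` written as `(Av, v)`). -/
theorem mgt_noncritical_energy_identity {H : Type*} [NormedAddCommGroup H]
    [InnerProductSpace ℝ H] [CompleteSpace H]
    (A : H →L[ℝ] H) (hA_sa : IsSelfAdjoint A)
    (hA_pos : ∀ v : H, 0 ≤ (inner ℝ (A v) v : ℝ))
    (τ α b c : ℝ) (hτ : 0 < τ) (hα : 0 < α) (hb : 0 < b) (hc : 0 < c)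
    (hγ : 0 < α - c ^ 2 * τ / b)
    (k : ℝ) (hk1 : c ^ 2 / b < k) (hk2 : k < α / τ)
    (u u1 u2 u3 : ℝ → H)
    (hu1 : ∀ t, HasDerivAt u (u1 t) t)
    (hu2 : ∀ t, HasDerivAt u1 (u2 t) t)
    (hu3 : ∀ t, HasDerivAt u2 (u3 t) t)
    (hcont : Continuous u3)
    (heq : ∀ t, τ • u3 t + α • u2 t + c ^ 2 • A (u t) + b • A (u1 t) = 0) :
    ∀ t, 0 ≤ t →
      HasDerivAt
        (fun t =>
          b * (inner ℝ (A (u1 t + (c ^ 2 / b) • u t)) (u1 t + (c ^ 2 / b) • u t) : ℝ)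
          + τ * ‖u2 t + k • u1 t‖ ^ 2
          + k * τ * (α / τ - k) * ‖u1 t‖ ^ 2
          + c ^ 2 * (k - c ^ 2 / b) * (inner ℝ (A (u t)) (u t) : ℝ))
        (-(2 * τ * (α / τ - k) * ‖u2 t‖ ^ 2
            + 2 * b * (k - c ^ 2 / b) * (inner ℝ (A (u1 t)) (u1 t) : ℝ))) t ∧
      -(2 * τ * (α / τ - k) * ‖u2 t‖ ^ 2
          + 2 * b * (k - c ^ 2 / b) * (inner ℝ (A (u1 t)) (u1 t) : ℝ)) ≤ 0 :=
  mgt_noncritical_energy_identity_general A hA_sa hA_pos τ α b c hτ hb k hk1 hk2 u u1 u2 u3 hu1 hu2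
    hu3 heq
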